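/- Let a⁰, a¹, a², a³ be real numbers with a⁰ = 0, and let ω¹, ω², ω³ be arbitrary reals (set ω⁰ = 0). Define the connection coefficients ω̊^a{}_{bc} := δ⁰_b ( a^a δ⁰_c − a_c δ^a_0 + Σ_{d,e} ω^d ε_{0dec} η^{ea} ), where a_c := η_{cd}a^d and ε is the totally antisymmetric Levi-Civita symbol on Fin 4 with ε_{0123} = 1. Then: (i) for all indices a, b, the quadratic combination 2( 2 ω̊^c{}_{[a d]} ω̊^b{}_c{}^d − 2 ω̊^b{}_{[a d]} ω̊^c{}_c{}^d − ω̊^c{}_{ca} ω̊^d{}_d{}^b + δ^b_a ω̊^c{}_{[c| f} ω̊^d{}_{|d]}{}^f ) vanishes (the gravitational energy-momentum density vanishes along the observer's worldline); and (ii) for all a, b, ω̊^{[ba]}{}_c η^{c0} + ω̊^d{}_d{}^{[b} η^{a]0} = 0 (the angular-momentum density vanishes along the worldline). -/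

import Mathlib

/-!
Along the worldline the connection has the form `ω̊^a{}_{bc} = δ⁰_b X^a{}_c`, and `X` with both
indices raised, `X^{ac} = η^{ce} X^a{}_e`, is antisymmetric: it is the infinitesimal Lorentz
transformation made of the boost along the acceleration and the rotation with angular velocity
`ω^d`. Since `b = 0` is forced, every contraction in the two densities collapses onto the time
index; what survives are terms `X^{b0} + X^{0b}`, which vanish by antisymmetry, and pairs
`X^0{}_d X^{bd} − X^b{}_d X^{0d}`, which cancel because `η` is symmetric.
-/

namespace Stmt1

noncomputable section

/-- Minkowski metric diag(1,-1,-1,-1) on `Fin 4` (it equals its own inverse). -/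
def η : Fin 4 → Fin 4 → ℝ := fun a b => if a = b then (if a = 0 then 1 else -1) else 0

/-- Totally antisymmetric Levi-Civita symbol on `Fin 4` with `ε_{0123} = 1`,
given by the Vandermonde formula `ε_{abcd} = ∏_{i<j}(v_j − v_i)/12`. -/
def eps (a b c d : Fin 4) : ℝ :=
  ((b.val : ℝ) - (a.val : ℝ)) * ((c.val : ℝ) - (a.val : ℝ)) * ((d.val : ℝ) - (a.val : ℝ)) *
    ((c.val : ℝ) - (b.val : ℝ)) * ((d.val : ℝ) - (b.val : ℝ)) * ((d.val : ℝ) - (c.val : ℝ)) / 12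

/-- Lowered acceleration `a_c := η_{cd} a^d`. -/
def lower (acc : Fin 4 → ℝ) : Fin 4 → ℝ := fun c => ∑ d, η c d * acc d

/-- The Levi-Civita spin connection along the worldline:
`ω̊^a{}_{bc} := δ⁰_b ( a^a δ⁰_c − a_c δ^a_0 + Σ_{d,e} ω^d ε_{0dec} η^{ea} )`. -/
def sc (acc om : Fin 4 → ℝ) : Fin 4 → Fin 4 → Fin 4 → ℝ := fun a b c =>
  (if b = (0 : Fin 4) then (1 : ℝ) else 0) *
    (acc a * (if c = (0 : Fin 4) then (1 : ℝ) else 0)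
      - lower acc c * (if a = (0 : Fin 4) then (1 : ℝ) else 0)
      + ∑ d, ∑ e, om d * eps 0 d e c * η e a)

/-- Spin connection with third index raised: `ω̊^a{}_b{}^d := η^{de} ω̊^a{}_{be}`. -/
def scU3 (acc om : Fin 4 → ℝ) : Fin 4 → Fin 4 → Fin 4 → ℝ := fun a b d =>
  ∑ e, η d e * sc acc om a b e

section SpinConnection

variable {ι R : Type*} [Fintype ι] [Field R]

def raiseThird (g : ι → ι → R) (ω : ι → ι → ι → R) (a b d : ι) : R :=
  ∑ e, g d e * ω a b e

-- The two densities of the theorem, for an arbitrary metric `g` and time index `o`.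
def energyMomentumDensity [DecidableEq ι] (g : ι → ι → R) (ω : ι → ι → ι → R) (a b : ι) : R :=
  2 * (2 * (∑ c, ∑ d, ((ω c a d - ω c d a) / 2) * raiseThird g ω b c d)
    - 2 * (∑ c, ∑ d, ((ω b a d - ω b d a) / 2) * raiseThird g ω c c d)
    - (∑ c, ω c c a) * (∑ d, raiseThird g ω d d b)
    + (if a = b then (1 : R) else 0) *
        ((1 / 2) * ((∑ f, (∑ c, ω c c f) * (∑ d, raiseThird g ω d d f))
          - ∑ f, ∑ c, ∑ d, ω c d f * raiseThird g ω d c f)))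

def angularMomentumDensity (g : ι → ι → R) (ω : ι → ι → ι → R) (o a b : ι) : R :=
  (1 / 2) * ((∑ c, (∑ e, g a e * ω b e c) * g c o) - (∑ c, (∑ e, g b e * ω a e c) * g c o))
    + (1 / 2) * ((∑ d, raiseThird g ω d d b) * g a o - (∑ d, raiseThird g ω d d a) * g b o)

def MiddleIndexSupported (o : ι) (F : ι → ι → ι → R) : Prop :=
  ∀ a b c, b ≠ o → F a b c = 0

variable {g : ι → ι → R} {ω : ι → ι → ι → R} {o : ι}

namespace MiddleIndexSupported

theorem raiseThird (hω : MiddleIndexSupported o ω) : MiddleIndexSupported o (raiseThird g ω) :=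
  fun a b _ hb => Finset.sum_eq_zero fun e _ => by rw [hω a b e hb, mul_zero]

theorem sum_diag {F : ι → ι → ι → R} (hF : MiddleIndexSupported o F) (f : ι) :
    ∑ c, F c c f = F o o f :=
  Fintype.sum_eq_single o fun c hc => hF c c f hc

theorem two_mul_sum_alt_mul [CharZero R] (hω : MiddleIndexSupported o ω) (p a : ι) (x : ι → R) :
    2 * ∑ d, ((ω p a d - ω p d a) / 2) * x d = ∑ d, ω p a d * x d - ω p o a * x o := by
  have hcollapse : ∑ d, ω p d a * x d = ω p o a * x o :=
    Fintype.sum_eq_single o fun d hd => by rw [hω p d a hd, zero_mul]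
  rw [← hcollapse, ← Finset.sum_sub_distrib, Finset.mul_sum]
  exact Finset.sum_congr rfl fun d _ => by field_simp

end MiddleIndexSupported

theorem sum_mul_raiseThird_comm (hg : ∀ a b, g a b = g b a) (p q r s : ι) :
    ∑ d, ω p q d * raiseThird g ω r s d = ∑ d, ω r s d * raiseThird g ω p q d := by
  simp only [raiseThird, Finset.mul_sum]
  rw [Finset.sum_comm]
  exact Finset.sum_congr rfl fun d _ => Finset.sum_congr rfl fun e _ => by rw [hg]; ring

theorem energyMomentumDensity_eq_zero [DecidableEq ι] [CharZero R] (hg : ∀ a b, g a b = g b a)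
    (hω : MiddleIndexSupported o ω)
    (hanti : ∀ a b, raiseThird g ω a o b = -raiseThird g ω b o a) (a b : ι) :
    energyMomentumDensity g ω a b = 0 := by
  have hU := hω.raiseThird (g := g)
  have hfirst : ∑ c, ∑ d, ((ω c a d - ω c d a) / 2) * raiseThird g ω b c d
      = ∑ d, ((ω o a d - ω o d a) / 2) * raiseThird g ω b o d :=
    Fintype.sum_eq_single o fun c hc =>
      Finset.sum_eq_zero fun d _ => by rw [hU b c d hc, mul_zero]
  have hsecond : ∑ c, ∑ d, ((ω b a d - ω b d a) / 2) * raiseThird g ω c c d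
      = ∑ d, ((ω b a d - ω b d a) / 2) * raiseThird g ω o o d := by
    rw [Finset.sum_comm]
    simp_rw [← Finset.mul_sum, hU.sum_diag]
  have hcross : ∑ d, ω o a d * raiseThird g ω b o d = ∑ d, ω b a d * raiseThird g ω o o d := by
    obtain rfl | ha := eq_or_ne a o
    · exact sum_mul_raiseThird_comm hg _ _ _ _
    · simp [hω _ a _ ha]
  have hquad : ∀ f, ∑ c, ∑ d, ω c d f * raiseThird g ω d c f = ω o o f * raiseThird g ω o o f :=
    fun f => by
      rw [Fintype.sum_eq_single o fun c hc =>
          Finset.sum_eq_zero fun d _ => by rw [hU d c f hc, mul_zero]]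
      exact Fintype.sum_eq_single o fun d hd => by rw [hω o d f hd, zero_mul]
  have hzero : raiseThird g ω o o o = 0 := self_eq_neg.mp (hanti o o)
  rw [energyMomentumDensity, hfirst, hsecond, hω.two_mul_sum_alt_mul, hω.two_mul_sum_alt_mul,
    hcross]
  simp only [hquad, hω.sum_diag, hU.sum_diag, sub_self, mul_zero, add_zero]
  linear_combination (-2 * ω o o a) * hanti b o + 2 * ω b o a * hzero

theorem angularMomentumDensity_eq_zero (hg : ∀ a b, g a b = g b a)
    (hω : MiddleIndexSupported o ω)
    (hanti : ∀ a b, raiseThird g ω a o b = -raiseThird g ω b o a) (a b : ι) :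
    angularMomentumDensity g ω o a b = 0 := by
  have hU := hω.raiseThird (g := g)
  have hlower : ∀ p q, ∑ c, (∑ e, g p e * ω q e c) * g c o = g p o * raiseThird g ω q o o := by
    intro p q
    have hcollapse : ∀ c, ∑ e, g p e * ω q e c = g p o * ω q o c := fun c =>
      Fintype.sum_eq_single o fun e he => by rw [hω q e c he, mul_zero]
    simp only [hcollapse, raiseThird, Finset.mul_sum]
    exact Finset.sum_congr rfl fun c _ => by rw [hg c o]; ring
  rw [angularMomentumDensity, hlower, hlower, hU.sum_diag, hU.sum_diag]
  linear_combination (g a o / 2) * hanti b o - (g b o / 2) * hanti a o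

end SpinConnection

theorem η_symm (a b : Fin 4) : η a b = η b a := by
  by_cases h : a = b
  · rw [h]
  · simp [η, h, Ne.symm h]

theorem η_mul_self (a : Fin 4) : η a a * η a a = 1 := by
  simp only [η]
  split_ifs <;> norm_num

theorem sum_η_mul (b : Fin 4) (f : Fin 4 → ℝ) : ∑ e, η b e * f e = η b b * f b :=
  Fintype.sum_eq_single b fun e he => by simp [η, he.symm]

theorem sum_mul_η (a : Fin 4) (f : Fin 4 → ℝ) : ∑ e, f e * η e a = f a * η a a := by
  simp_rw [mul_comm (f _), η_symm _ a, sum_η_mul]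

theorem eps_swap_last (a b c d : Fin 4) : eps a b c d = -eps a b d c := by
  unfold eps
  ring

theorem sc_middleIndexSupported (acc om : Fin 4 → ℝ) : MiddleIndexSupported 0 (sc acc om) :=
  fun a b c hb => by simp [sc, hb]

theorem raiseThird_sc (acc om : Fin 4 → ℝ) (a b : Fin 4) :
    raiseThird η (sc acc om) a 0 b =
      acc a * (if b = 0 then 1 else 0) - acc b * (if a = 0 then 1 else 0)
        + η a a * η b b * ∑ d, om d * eps 0 d a b := by
  have hδ : η b b * (if b = 0 then 1 else 0) = if b = 0 then 1 else 0 := by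
    split_ifs with hb <;> simp [hb, η]
  simp only [raiseThird, sum_η_mul, sc, ite_true, one_mul, lower, sum_mul_η, ← Finset.sum_mul]
  linear_combination acc a * hδ - acc b * (if a = 0 then 1 else 0) * η_mul_self b

theorem raiseThird_sc_antisymm (acc om : Fin 4 → ℝ) (a b : Fin 4) :
    raiseThird η (sc acc om) a 0 b = -raiseThird η (sc acc om) b 0 a := by
  have heps : ∑ d, om d * eps 0 d a b = -∑ d, om d * eps 0 d b a := by
    rw [← Finset.sum_neg_distrib]
    exact Finset.sum_congr rfl fun d _ => by rw [eps_swap_last]; ring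
  rw [raiseThird_sc, raiseThird_sc, heps]
  ring

theorem prf_densities_vanish_along_worldline_general (acc om : Fin 4 → ℝ) :
    -- (i) the gravitational energy-momentum density vanishes:
    -- 2( 2 ω̊^c_{[a d]} ω̊^b_c{}^d − 2 ω̊^b_{[a d]} ω̊^c_c{}^d − ω̊^c_{ca} ω̊^d_d{}^b
    --    + δ^b_a ω̊^c_{[c|f} ω̊^d_{|d]}{}^f ) = 0
    (∀ a b : Fin 4,
      2 * (2 * (∑ c, ∑ d, ((sc acc om c a d - sc acc om c d a) / 2) * scU3 acc om b c d)
        - 2 * (∑ c, ∑ d, ((sc acc om b a d - sc acc om b d a) / 2) * scU3 acc om c c d)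
        - (∑ c, sc acc om c c a) * (∑ d, scU3 acc om d d b)
        + (if a = b then (1 : ℝ) else 0) *
            ((1 / 2) * ((∑ f, (∑ c, sc acc om c c f) * (∑ d, scU3 acc om d d f))
              - ∑ f, ∑ c, ∑ d, sc acc om c d f * scU3 acc om d c f))) = 0) ∧
    -- (ii) the angular-momentum density vanishes:
    -- ω̊^{[ba]}{}_c η^{c0} + ω̊^d{}_d{}^{[b} η^{a]0} = 0
    (∀ a b : Fin 4,
      (1 / 2) * ((∑ c, (∑ e, η a e * sc acc om b e c) * η c 0)
        - (∑ c, (∑ e, η b e * sc acc om a e c) * η c 0))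
      + (1 / 2) * ((∑ d, scU3 acc om d d b) * η a 0
        - (∑ d, scU3 acc om d d a) * η b 0) = 0) :=
  ⟨energyMomentumDensity_eq_zero η_symm (sc_middleIndexSupported acc om)
      (raiseThird_sc_antisymm acc om),
    angularMomentumDensity_eq_zero η_symm (sc_middleIndexSupported acc om)
      (raiseThird_sc_antisymm acc om)⟩

theorem prf_densities_vanish_along_worldline (acc om : Fin 4 → ℝ)
    (hacc : acc 0 = 0) (hom : om 0 = 0) :
    -- (i) the gravitational energy-momentum density vanishes:
    -- 2( 2 ω̊^c_{[a d]} ω̊^b_c{}^d − 2 ω̊^b_{[a d]} ω̊^c_c{}^d − ω̊^c_{ca} ω̊^d_d{}^b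
    --    + δ^b_a ω̊^c_{[c|f} ω̊^d_{|d]}{}^f ) = 0
    (∀ a b : Fin 4,
      2 * (2 * (∑ c, ∑ d, ((sc acc om c a d - sc acc om c d a) / 2) * scU3 acc om b c d)
        - 2 * (∑ c, ∑ d, ((sc acc om b a d - sc acc om b d a) / 2) * scU3 acc om c c d)
        - (∑ c, sc acc om c c a) * (∑ d, scU3 acc om d d b)
        + (if a = b then (1 : ℝ) else 0) *
            ((1 / 2) * ((∑ f, (∑ c, sc acc om c c f) * (∑ d, scU3 acc om d d f))
              - ∑ f, ∑ c, ∑ d, sc acc om c d f * scU3 acc om d c f))) = 0) ∧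
    -- (ii) the angular-momentum density vanishes:
    -- ω̊^{[ba]}{}_c η^{c0} + ω̊^d{}_d{}^{[b} η^{a]0} = 0
    (∀ a b : Fin 4,
      (1 / 2) * ((∑ c, (∑ e, η a e * sc acc om b e c) * η c 0)
        - (∑ c, (∑ e, η b e * sc acc om a e c) * η c 0))
      + (1 / 2) * ((∑ d, scU3 acc om d d b) * η a 0
        - (∑ d, scU3 acc om d d a) * η b 0) = 0) :=
  prf_densities_vanish_along_worldline_general acc om

end

end Stmt1
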